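/- Let p be an odd prime, k ≥ 2, q = p^k, and let j be an integer with 1 ≤ j ≤ ⌊k/2⌋. For multiplicative characters χ, χ' of (ℤ/qℤ)^* with parameters t_χ, t_{χ'}, one has t_χ ≡ t_{χ'} (mod p^j) if and only if χ'χ^{-1} ∈ C_p(k, k−j), where C_p(k, j) = {χ : χ(x) = 1 for all x ∈ (ℤ/qℤ)^* with x ≡ 1 (mod p^j)}. -/

import Mathlib

/-!
For `j ≤ k / 2` the parameter determines `χ` on the subgroup `1 + p ^ (k - j) ℤ`: writing
`1 + p ^ (k - j) y = 1 + p ^ l x` with `x = p ^ (k - l - j) y`, the defining identity of `t_χ` gives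
`χ (1 + p ^ (k - j) y) = e_{p ^ j} (t_χ y)`; in the odd case the quadratic correction vanishes
because `p ∣ x`. So on this subgroup `χ' χ⁻¹` is the additive character
`y ↦ e_{p ^ j} ((t' - t) y)`, which is trivial exactly when `t ≡ t' (mod p ^ j)`;
`1 + p ^ (k - j)` is a unit since `p` is nilpotent in `ℤ/p^kℤ`.
-/

open Complex Finset

/-- The standard additive character `e_q(x) = exp(2πix/q)` of `ℤ/qℤ`. -/
noncomputable def eZMod (q : ℕ) (x : ZMod q) : ℂ :=
  Complex.exp (2 * Real.pi * Complex.I * x.val / q)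

lemma eZMod_eq_stdAddChar (N : ℕ) [NeZero N] (x : ZMod N) : eZMod N x = ZMod.stdAddChar x := by
  rw [ZMod.stdAddChar_apply, ZMod.toCircle_apply, eZMod]

lemma eZMod_sub (N : ℕ) [NeZero N] (a b : ZMod N) : eZMod N (a - b) = eZMod N a / eZMod N b := by
  simp only [eZMod_eq_stdAddChar, AddChar.map_sub_eq_div]

lemma eZMod_eq_one_iff (N : ℕ) [NeZero N] (a : ZMod N) : eZMod N a = 1 ↔ a = 0 := by
  rw [eZMod_eq_stdAddChar, ← (ZMod.stdAddChar (N := N)).map_zero_eq_one,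
    ZMod.injective_stdAddChar.eq_iff]

lemma eZMod_natCast_mul_intCast {N a M : ℕ} [NeZero N] [NeZero M] (h : N = a * M) (c : ℤ) :
    eZMod N ((a : ZMod N) * c) = eZMod M c := by
  have ha : (a : ℂ) ≠ 0 := by
    have := NeZero.ne N
    exact Nat.cast_ne_zero.mpr (by rintro rfl; simp_all)
  rw [eZMod_eq_stdAddChar, eZMod_eq_stdAddChar, ← Int.cast_natCast, ← Int.cast_mul,
    ZMod.stdAddChar_coe, ZMod.stdAddChar_coe, h]
  push_cast
  field_simp

lemma natCast_mul_val_eq_of_dvd_mul {N L M : ℕ} [NeZero M] (h : N ∣ L * M) (a : ZMod M) (c : ℤ)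
    (hc : (c : ZMod M) = a) : (L : ZMod N) * (a.val : ZMod N) = L * c := by
  rw [← ZMod.natCast_zmod_val a, ← Int.cast_natCast, ZMod.intCast_eq_intCast_iff_dvd_sub] at hc
  rw [← Int.cast_natCast, ← Int.cast_natCast (R := ZMod N) a.val, ← Int.cast_mul, ← Int.cast_mul,
    ZMod.intCast_eq_intCast_iff_dvd_sub, ← mul_sub]
  exact (Int.natCast_dvd_natCast.mpr h).trans
    (by push_cast; exact mul_dvd_mul_left _ (dvd_sub_comm.mp hc))

lemma exists_eq_one_add_mul_of_val_cast_eq_one {N d : ℕ} [NeZero N] {x : ZMod N}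
    (hx : (x.val : ZMod d) = 1) : ∃ y : ℤ, x = 1 + d * y := by
  rw [← Int.cast_natCast, ← Int.cast_one, eq_comm, ZMod.intCast_eq_intCast_iff_dvd_sub] at hx
  obtain ⟨y, hy⟩ := hx
  refine ⟨y, ?_⟩
  rw [← ZMod.natCast_zmod_val x, ← Int.cast_natCast, sub_eq_iff_eq_add'.mp hy]
  push_cast
  rfl

/-- `t = t_χ`, with `l = k / 2`: the two clauses are the even and the odd case of the definition. -/
def IsParam (p k : ℕ) (χ : MulChar (ZMod (p ^ k)) ℂ) (t : ZMod (p ^ (k - k / 2))) : Prop :=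
  (k % 2 = 0 → ∀ x : ZMod (p ^ (k - k / 2)),
      χ (1 + (p : ZMod (p ^ k)) ^ (k / 2) * (x.val : ZMod (p ^ k))) =
        eZMod (p ^ (k - k / 2)) (t * x)) ∧
    (k % 2 = 1 → ∀ x : ZMod (p ^ (k - k / 2)),
      χ (1 + (p : ZMod (p ^ k)) ^ (k / 2) * (x.val : ZMod (p ^ k)) +
          (p : ZMod (p ^ k)) ^ (2 * (k / 2)) *
            (((x ^ 2 * (2 : ZMod (p ^ (k - k / 2)))⁻¹).val : ZMod (p ^ k)))) =
        eZMod (p ^ (k - k / 2)) (t * x))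

lemma IsParam.apply_one_add_pow_mul {p k j : ℕ} [NeZero p] {χ : MulChar (ZMod (p ^ k)) ℂ}
    {t : ZMod (p ^ (k - k / 2))} (hχ : IsParam p k χ t) (hjl : j ≤ k / 2) (y : ℤ) :
    χ (1 + (p : ZMod (p ^ k)) ^ (k - j) * y) = eZMod (p ^ j) ((t.val : ZMod (p ^ j)) * y) := by
  set X : ZMod (p ^ (k - k / 2)) := ((p ^ (k - k / 2 - j) * y : ℤ) : ZMod (p ^ (k - k / 2)))
    with hX
  have hX' : X = (p : ZMod (p ^ (k - k / 2))) ^ (k - k / 2 - j) * y := by push_cast [hX]; rfl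
  have hlin : (p : ZMod (p ^ k)) ^ (k / 2) * (X.val : ZMod (p ^ k)) =
      (p : ZMod (p ^ k)) ^ (k - j) * y := by
    rw [← Nat.cast_pow,
      natCast_mul_val_eq_of_dvd_mul (by rw [← pow_add]; exact pow_dvd_pow p (by omega)) X _ hX.symm,
      Int.cast_mul, Int.cast_pow, Int.cast_natCast, Nat.cast_pow, ← mul_assoc, ← pow_add]
    congr 2
    omega
  have hquad (hodd : k % 2 = 1) : (p : ZMod (p ^ k)) ^ (2 * (k / 2)) *
      (((X ^ 2 * (2 : ZMod (p ^ (k - k / 2)))⁻¹).val : ZMod (p ^ k))) = 0 := by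
    set b : ZMod (p ^ (k - k / 2)) :=
      (p : ZMod (p ^ (k - k / 2))) ^ (k - k / 2 - j - 1) * y * X * 2⁻¹
    have hb : (((p * b.val : ℕ) : ℤ) : ZMod (p ^ (k - k / 2))) = X ^ 2 * 2⁻¹ := calc
      _ = (p : ZMod (p ^ (k - k / 2))) ^ (k - k / 2 - j - 1 + 1) * y * X * 2⁻¹ := by
          rw [Int.cast_natCast, Nat.cast_mul, ZMod.natCast_zmod_val]; ring
      _ = X ^ 2 * 2⁻¹ := by rw [Nat.sub_add_cancel (by omega), ← hX']; ring
    rw [← Nat.cast_pow,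
      natCast_mul_val_eq_of_dvd_mul (by rw [← pow_add]; exact pow_dvd_pow p (by omega)) _ _ hb,
      Int.cast_natCast, Nat.cast_mul, ← mul_assoc, ← Nat.cast_mul, ← pow_succ,
      (by omega : 2 * (k / 2) + 1 = k), ZMod.natCast_self, zero_mul]
  have he : eZMod (p ^ (k - k / 2)) (t * X) = eZMod (p ^ j) ((t.val : ZMod (p ^ j)) * y) := by
    have ht : t * X =
        ((p ^ (k - k / 2 - j) : ℕ) : ZMod (p ^ (k - k / 2))) * ((t.val * y : ℤ)) := by
      push_cast
      rw [ZMod.natCast_zmod_val, hX']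
      ring
    rw [ht, eZMod_natCast_mul_intCast (by rw [← pow_add, Nat.sub_add_cancel (by omega)])]
    push_cast
    rfl
  rcases Nat.mod_two_eq_zero_or_one k with h | h
  · rw [← hlin, hχ.1 h X, he]
  · rw [← hlin, ← add_zero (1 + _), ← hquad h, hχ.2 h X, he]

theorem param_congruent_iff_general
    (p k j : ℕ) [Fact p.Prime] (hj : 1 ≤ j) (hjl : j ≤ k / 2)
    (χ χ' : MulChar (ZMod (p ^ k)) ℂ) (t t' : ZMod (p ^ (k - k / 2)))
    (hte : k % 2 = 0 → ∀ x : ZMod (p ^ (k - k / 2)),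
      χ (1 + (p : ZMod (p ^ k)) ^ (k / 2) * (x.val : ZMod (p ^ k))) =
        eZMod (p ^ (k - k / 2)) (t * x))
    (hto : k % 2 = 1 → ∀ x : ZMod (p ^ (k - k / 2)),
      χ (1 + (p : ZMod (p ^ k)) ^ (k / 2) * (x.val : ZMod (p ^ k)) +
          (p : ZMod (p ^ k)) ^ (2 * (k / 2)) *
            (((x ^ 2 * (2 : ZMod (p ^ (k - k / 2)))⁻¹).val : ZMod (p ^ k)))) =
        eZMod (p ^ (k - k / 2)) (t * x))
    (hte' : k % 2 = 0 → ∀ x : ZMod (p ^ (k - k / 2)),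
      χ' (1 + (p : ZMod (p ^ k)) ^ (k / 2) * (x.val : ZMod (p ^ k))) =
        eZMod (p ^ (k - k / 2)) (t' * x))
    (hto' : k % 2 = 1 → ∀ x : ZMod (p ^ (k - k / 2)),
      χ' (1 + (p : ZMod (p ^ k)) ^ (k / 2) * (x.val : ZMod (p ^ k)) +
          (p : ZMod (p ^ k)) ^ (2 * (k / 2)) *
            (((x ^ 2 * (2 : ZMod (p ^ (k - k / 2)))⁻¹).val : ZMod (p ^ k)))) =
        eZMod (p ^ (k - k / 2)) (t' * x)) :
    ((t.val : ZMod (p ^ j)) = (t'.val : ZMod (p ^ j))) ↔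
      (∀ x : (ZMod (p ^ k))ˣ, (((x : ZMod (p ^ k)).val : ZMod (p ^ (k - j)))) = 1 →
        (χ' * χ⁻¹) (x : ZMod (p ^ k)) = 1) := by
  have key (y : ℤ) : (χ' * χ⁻¹) (1 + (p : ZMod (p ^ k)) ^ (k - j) * y) =
      eZMod (p ^ j) (((t'.val : ZMod (p ^ j)) - t.val) * y) := by
    rw [MulChar.mul_apply, MulChar.inv_apply_eq_inv', ← div_eq_mul_inv, sub_mul, eZMod_sub,
      IsParam.apply_one_add_pow_mul ⟨hte, hto⟩ hjl, IsParam.apply_one_add_pow_mul ⟨hte', hto'⟩ hjl]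
  constructor
  · intro h x hx
    obtain ⟨y, hy⟩ := exists_eq_one_add_mul_of_val_cast_eq_one hx
    rw [hy, Nat.cast_pow, key, h, sub_self, zero_mul, (eZMod_eq_one_iff _ _).mpr rfl]
  · intro H
    have hu : IsUnit (1 + (p : ZMod (p ^ k)) ^ (k - j)) := IsNilpotent.isUnit_one_add
      (IsNilpotent.pow_of_pos ⟨k, by rw [← Nat.cast_pow, ZMod.natCast_self]⟩ (by omega))
    have hval : (((hu.unit : ZMod (p ^ k)).val : ZMod (p ^ (k - j)))) = 1 := by
      rw [IsUnit.unit_spec, ← ZMod.cast_eq_val,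
        ← ZMod.castHom_apply (h := pow_dvd_pow p (Nat.sub_le k j)), map_add, map_one, map_pow,
        map_natCast, ← Nat.cast_pow, ZMod.natCast_self, add_zero]
    have key1 := key 1
    simp only [Int.cast_one, mul_one] at key1
    have h := H hu.unit hval
    rw [IsUnit.unit_spec, key1, eZMod_eq_one_iff, sub_eq_zero] at h
    exact h.symm

/-- **Congruence of parameters.** Let `p` be an odd prime, `k ≥ 2`, `q = p^k`,
`1 ≤ j ≤ ⌊k/2⌋`, and let `χ, χ'` be multiplicative characters of `(ℤ/qℤ)^*` with
parameters `t, t'`. Then `t ≡ t' (mod p^j)` if and only if `χ'χ⁻¹ ∈ C_p(k, k-j)`,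
i.e. `χ'χ⁻¹` is trivial on all units `x ≡ 1 (mod p^{k-j})`. -/
theorem param_congruent_iff
    (p k j : ℕ) [Fact p.Prime] (hodd : p ≠ 2) (hk : 2 ≤ k) (hj : 1 ≤ j) (hjl : j ≤ k / 2)
    (χ χ' : MulChar (ZMod (p ^ k)) ℂ) (t t' : ZMod (p ^ (k - k / 2)))
    (hte : k % 2 = 0 → ∀ x : ZMod (p ^ (k - k / 2)),
      χ (1 + (p : ZMod (p ^ k)) ^ (k / 2) * (x.val : ZMod (p ^ k))) =
        eZMod (p ^ (k - k / 2)) (t * x))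
    (hto : k % 2 = 1 → ∀ x : ZMod (p ^ (k - k / 2)),
      χ (1 + (p : ZMod (p ^ k)) ^ (k / 2) * (x.val : ZMod (p ^ k)) +
          (p : ZMod (p ^ k)) ^ (2 * (k / 2)) *
            (((x ^ 2 * (2 : ZMod (p ^ (k - k / 2)))⁻¹).val : ZMod (p ^ k)))) =
        eZMod (p ^ (k - k / 2)) (t * x))
    (hte' : k % 2 = 0 → ∀ x : ZMod (p ^ (k - k / 2)),
      χ' (1 + (p : ZMod (p ^ k)) ^ (k / 2) * (x.val : ZMod (p ^ k))) =
        eZMod (p ^ (k - k / 2)) (t' * x))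
    (hto' : k % 2 = 1 → ∀ x : ZMod (p ^ (k - k / 2)),
      χ' (1 + (p : ZMod (p ^ k)) ^ (k / 2) * (x.val : ZMod (p ^ k)) +
          (p : ZMod (p ^ k)) ^ (2 * (k / 2)) *
            (((x ^ 2 * (2 : ZMod (p ^ (k - k / 2)))⁻¹).val : ZMod (p ^ k)))) =
        eZMod (p ^ (k - k / 2)) (t' * x)) :
    ((t.val : ZMod (p ^ j)) = (t'.val : ZMod (p ^ j))) ↔
      (∀ x : (ZMod (p ^ k))ˣ, (((x : ZMod (p ^ k)).val : ZMod (p ^ (k - j)))) = 1 →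
        (χ' * χ⁻¹) (x : ZMod (p ^ k)) = 1) :=
  param_congruent_iff_general p k j hj hjl χ χ' t t' hte hto hte' hto'
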